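/- The two boosts along the same axis compose according to φ_{αn} ∘ φ_{βn} acting on null directions: for all 0 < α, β < 1 and unit n ∈ ℝ³, the matrix product (I + σ(αn))(I + σ(βn)) equals (1 + αβ)(I + σ(γn)) with γ = (α+β)/(1+αβ); consequently φ_{αn}(φ_{βn}(x)) = φ_{γn}(x) for all x ∈ S² (relativistic velocity addition). -/

import Mathlib

/-! With `Q = σ(q)` and `X = σ(x)`, the relations `QX + XQ = 2⟨q,x⟩` and `Q² = ‖q‖²` give
`(I + Q)(I + X)(I + Q) = D • (I + σ(φ_q x))`, where `D = 1 + ‖q‖² + 2⟨q,x⟩`. For a unit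
vector `n` we have `σ(n)² = I`, so boosts along `n` commute and multiply as
`(I + σ(αn))(I + σ(βn)) = (1 + αβ)(I + σ(γn))`. Hence sandwiching `I + σ(x)` with `βn` and
then with `αn` agrees, up to a scalar, with sandwiching it once with `γn`; the trace of
`a • (I + σ(y))` recovers `a`, and `σ` is injective. Taking determinants,
`det (I + σ(x)) = 1 - ‖x‖²` shows that `φ_q` preserves `S²`, which keeps every `D` positive. -/

open Matrix

noncomputable def phiMap (q p : EuclideanSpace ℝ (Fin 3)) : EuclideanSpace ℝ (Fin 3) :=
  (1 + ‖q‖ ^ 2 + 2 * (inner ℝ q p : ℝ))⁻¹ •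
    ((1 - ‖q‖ ^ 2) • p + (2 * (1 + (inner ℝ q p : ℝ))) • q)

noncomputable def pauliSigma (x : EuclideanSpace ℝ (Fin 3)) : Matrix (Fin 2) (Fin 2) ℂ :=
  (x 0 : ℂ) • !![0, 1; 1, 0] + (x 1 : ℂ) • !![0, -Complex.I; Complex.I, 0] +
    (x 2 : ℂ) • !![1, 0; 0, -1]

lemma pauliSigma_add (x y : EuclideanSpace ℝ (Fin 3)) :
    pauliSigma (x + y) = pauliSigma x + pauliSigma y := by
  simp only [pauliSigma, PiLp.add_apply, Complex.ofReal_add, add_smul]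
  abel

lemma pauliSigma_smul (c : ℝ) (x : EuclideanSpace ℝ (Fin 3)) :
    pauliSigma (c • x) = c • pauliSigma x := by
  simp only [pauliSigma, PiLp.smul_apply, smul_eq_mul, Complex.ofReal_mul, smul_add, mul_smul,
    Complex.coe_smul]

lemma pauliSigma_anticomm (x y : EuclideanSpace ℝ (Fin 3)) :
    pauliSigma x * pauliSigma y + pauliSigma y * pauliSigma x = (2 * inner ℝ x y) • 1 := by
  ext i j
  fin_cases i <;> fin_cases j <;>
    simp [pauliSigma, PiLp.inner_apply, Fin.sum_univ_three] <;>
    ring_nf <;> simp only [Complex.I_sq] <;> ring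

lemma pauliSigma_mul_self (x : EuclideanSpace ℝ (Fin 3)) :
    pauliSigma x * pauliSigma x = (‖x‖ ^ 2) • 1 := by
  have h := pauliSigma_anticomm x x
  rw [real_inner_self_eq_norm_sq, ← two_smul ℝ, mul_smul] at h
  exact smul_right_injective _ two_ne_zero h

lemma trace_pauliSigma (x : EuclideanSpace ℝ (Fin 3)) : (pauliSigma x).trace = 0 := by
  simp [pauliSigma, trace_fin_two]

lemma det_one_add_pauliSigma (x : EuclideanSpace ℝ (Fin 3)) :
    (1 + pauliSigma x).det = ((1 - ‖x‖ ^ 2 : ℝ) : ℂ) := by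
  rw [EuclideanSpace.norm_sq_eq]
  simp [pauliSigma, det_fin_two, Fin.sum_univ_three]
  linear_combination (x 1 : ℂ) ^ 2 * Complex.I_sq

lemma pauliSigma_injective : Function.Injective pauliSigma := by
  intro x y h
  have h00 := congrFun (congrFun h 0) 0
  have h10 := congrFun (congrFun h 1) 0
  simp [pauliSigma] at h00 h10
  ext i
  fin_cases i
  · simpa using congrArg Complex.re h10
  · simpa using congrArg Complex.im h10
  · simpa using h00

lemma one_add_smul_mul_one_add_smul {K A : Type*} [Field K] [Ring A] [Algebra K A] {S : A}
    (hS : S * S = 1) {a b : K} (hab : 1 + a * b ≠ 0) :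
    (1 + a • S) * (1 + b • S) = (1 + a * b) • (1 + ((a + b) / (1 + a * b)) • S) := by
  rw [smul_add, smul_smul, mul_div_cancel₀ _ hab]
  simp only [mul_add, add_mul, mul_one, one_mul, smul_mul_smul_comm, hS]
  module

lemma one_add_pauliSigma_smul_mul {n : EuclideanSpace ℝ (Fin 3)} (hn : ‖n‖ = 1) {a b : ℝ}
    (hab : 1 + a * b ≠ 0) :
    (1 + pauliSigma (a • n)) * (1 + pauliSigma (b • n)) =
      (1 + a * b) • (1 + pauliSigma (((a + b) / (1 + a * b)) • n)) := by
  simp only [pauliSigma_smul]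
  exact one_add_smul_mul_one_add_smul (by simp [pauliSigma_mul_self, hn]) hab

noncomputable def phiDenom (q p : EuclideanSpace ℝ (Fin 3)) : ℝ :=
  1 + ‖q‖ ^ 2 + 2 * inner ℝ q p

lemma one_add_pauliSigma_conj {q p : EuclideanSpace ℝ (Fin 3)} (hD : phiDenom q p ≠ 0) :
    (1 + pauliSigma q) * (1 + pauliSigma p) * (1 + pauliSigma q) =
      phiDenom q p • (1 + pauliSigma (phiMap q p)) := by
  set Q := pauliSigma q
  set X := pauliSigma p
  have hanti : Q * X + X * Q = (2 * inner ℝ q p) • 1 := pauliSigma_anticomm q p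
  have hQXQ : Q * X * Q = (2 * inner ℝ q p) • Q - ‖q‖ ^ 2 • X := by
    rw [mul_assoc, eq_sub_of_add_eq' hanti, mul_sub, mul_smul_comm, mul_one, ← mul_assoc,
      pauliSigma_mul_self, smul_one_mul]
  have hphi : pauliSigma (phiMap q p) =
      (phiDenom q p)⁻¹ • ((1 - ‖q‖ ^ 2) • X + (2 * (1 + inner ℝ q p)) • Q) := by
    simp only [phiMap, pauliSigma_smul, pauliSigma_add, X, Q, phiDenom]
  calc (1 + Q) * (1 + X) * (1 + Q) = 1 + 2 • Q + X + Q * Q + (Q * X + X * Q) + Q * X * Q := by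
        noncomm_ring
    _ = phiDenom q p • (1 + pauliSigma (phiMap q p)) := by
        rw [hanti, hQXQ, pauliSigma_mul_self, hphi, smul_add, smul_smul, mul_inv_cancel₀ hD,
          one_smul, phiDenom]
        module

lemma phiDenom_pos {q p : EuclideanSpace ℝ (Fin 3)} (hq : ‖q‖ < 1) (hp : ‖p‖ = 1) :
    0 < phiDenom q p := by
  have h := neg_le_of_abs_le (abs_real_inner_le_norm q p)
  rw [hp, mul_one] at h
  unfold phiDenom
  nlinarith

lemma norm_phiMap {q p : EuclideanSpace ℝ (Fin 3)} (hD : phiDenom q p ≠ 0) (hp : ‖p‖ = 1) :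
    ‖phiMap q p‖ = 1 := by
  have h := congrArg det (one_add_pauliSigma_conj hD)
  rw [det_mul, det_mul, det_one_add_pauliSigma p, hp, ← Complex.coe_smul, det_smul,
    det_one_add_pauliSigma (phiMap q p)] at h
  simp only [Fintype.card_fin, one_pow, sub_self, Complex.ofReal_zero, mul_zero, zero_mul] at h
  have h' : phiDenom q p ^ 2 * (1 - ‖phiMap q p‖ ^ 2) = 0 := by exact_mod_cast h.symm
  have h2 : ‖phiMap q p‖ ^ 2 = 1 := by
    have := (mul_eq_zero.mp h').resolve_left (pow_ne_zero 2 hD)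
    linarith
  exact (pow_eq_one_iff_of_nonneg (norm_nonneg _) two_ne_zero).mp h2

lemma eq_of_smul_one_add_pauliSigma_eq {a b : ℝ} {y z : EuclideanSpace ℝ (Fin 3)} (ha : a ≠ 0)
    (h : a • (1 + pauliSigma y) = b • (1 + pauliSigma z)) : y = z := by
  have htr := congrArg trace h
  simp only [trace_smul, trace_add, trace_one, trace_pauliSigma] at htr
  have hab : a = b := by simpa using htr
  subst hab
  exact pauliSigma_injective (add_left_cancel (smul_right_injective _ ha h))

theorem velocity_addition (n : EuclideanSpace ℝ (Fin 3)) (hn : ‖n‖ = 1)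
    (α β : ℝ) (hα0 : 0 < α) (hα1 : α < 1) (hβ0 : 0 < β) (hβ1 : β < 1) :
    (1 + pauliSigma (α • n)) * (1 + pauliSigma (β • n)) =
      ((1 + α * β : ℝ) : ℂ) • (1 + pauliSigma (((α + β) / (1 + α * β)) • n)) ∧
    (∀ x : EuclideanSpace ℝ (Fin 3), ‖x‖ = 1 →
      phiMap (α • n) (phiMap (β • n) x) = phiMap (((α + β) / (1 + α * β)) • n) x) := by
  have hab : 0 < 1 + α * β := by positivity
  set γ := (α + β) / (1 + α * β)
  have hγ0 : 0 < γ := by positivity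
  have hγ1 : γ < 1 := by rw [div_lt_one hab]; nlinarith
  have hαβ := one_add_pauliSigma_smul_mul hn hab.ne'
  have hβα : (1 + pauliSigma (β • n)) * (1 + pauliSigma (α • n)) =
      (1 + α * β) • (1 + pauliSigma (γ • n)) := by
    rw [one_add_pauliSigma_smul_mul hn (by linarith), add_comm β, mul_comm β]
  refine ⟨by rw [Complex.coe_smul]; exact hαβ, fun x hx => ?_⟩
  have hsub : ∀ c : ℝ, 0 < c → c < 1 → ‖c • n‖ < 1 := fun c hc0 hc1 => by
    rwa [norm_smul, hn, mul_one, Real.norm_of_nonneg hc0.le]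
  have hDβ := phiDenom_pos (hsub β hβ0 hβ1) hx
  have hDα := phiDenom_pos (hsub α hα0 hα1) (norm_phiMap hDβ.ne' hx)
  have hDγ := phiDenom_pos (hsub γ hγ0 hγ1) hx
  refine eq_of_smul_one_add_pauliSigma_eq (b := (1 + α * β) ^ 2 * phiDenom (γ • n) x)
    (mul_pos hDβ hDα).ne' ?_
  calc _ = (1 + pauliSigma (α • n)) *
          ((1 + pauliSigma (β • n)) * (1 + pauliSigma x) * (1 + pauliSigma (β • n))) *
            (1 + pauliSigma (α • n)) := by
        rw [one_add_pauliSigma_conj hDβ.ne', mul_smul_comm, smul_mul_assoc,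
          one_add_pauliSigma_conj hDα.ne', smul_smul]
    _ = (1 + pauliSigma (α • n)) * (1 + pauliSigma (β • n)) * (1 + pauliSigma x) *
          ((1 + pauliSigma (β • n)) * (1 + pauliSigma (α • n))) := by
        simp only [mul_assoc]
    _ = _ := by
        rw [hαβ, hβα, smul_mul_assoc, smul_mul_assoc, mul_smul_comm,
          one_add_pauliSigma_conj hDγ.ne', smul_smul, smul_smul, sq, mul_assoc]
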